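/- (Theorem 2) Let T be a finite tree with a designated root, with strictly positive resistances r_e > 0 and reactances x_e > 0 on its edges, and let K_r and K_x be the path-sum matrices with weights r_e and x_e respectively. Let Σ_p and Σ_q be symmetric matrices indexed by the non-root vertices with all entries strictly positive, and let Σ_pq be a matrix indexed by the non-root vertices with all entries strictly positive. Set Σ_ε = K_r Σ_p K_r + K_x Σ_q K_x + K_r Σ_pq K_x + (K_r Σ_pq K_x)^T. Then for any two distinct non-root vertices a and b such that a is a descendant of b: Σ_ε(a,a) > Σ_ε(b,b). -/
import Mathlib


open Classical Matrix

/-- A finite tree with a designated root vertex (the slack bus). -/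
structure GridTree (V : Type*) [Fintype V] [DecidableEq V] where
  graph : SimpleGraph V
  root : V
  isTree : graph.IsTree

namespace GridTree

variable {V : Type*} [Fintype V] [DecidableEq V] (T : GridTree V)

/-- The unique path (as a walk) from a vertex to the root. -/
noncomputable def pathToRoot (a : V) : T.graph.Walk a T.root :=
  (T.isTree.existsUnique_path a T.root).choose

/-- `E_a`: the set of edges on the unique path from `a` to the root. -/
noncomputable def pathEdges (a : V) : Finset (Sym2 V) :=
  (T.pathToRoot a).edges.toFinset

/-- `c` is a descendant of `a`: `a` lies on the unique path from `c` to the root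
(in particular every vertex is a descendant of itself). -/
def Descendant (c a : V) : Prop := a ∈ (T.pathToRoot c).support

/-- `b` is the parent of `a`: the edge `{a, b}` lies on the path from `a` to the root
(equivalently, `b` is the unique neighbor of `a` on that path). -/
noncomputable def IsParent (a b : V) : Prop := s(a, b) ∈ T.pathEdges a

/-- The path-sum matrix `K_w`, indexed by the non-root vertices:
`K_w(a,b) = ∑_{e ∈ E_a ∩ E_b} w_e`. -/
noncomputable def pathMatrix (w : Sym2 V → ℝ) :
    Matrix {v : V // v ≠ T.root} {v : V // v ≠ T.root} ℝ :=
  fun a b => ∑ e ∈ T.pathEdges a.1 ∩ T.pathEdges b.1, w e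

/-- The reduced weighted graph Laplacian with edge weights `w`, indexed by the
non-root vertices (the row and column of the root are deleted). -/
noncomputable def lap (w : Sym2 V → ℝ) :
    Matrix {v : V // v ≠ T.root} {v : V // v ≠ T.root} ℝ :=
  fun a b =>
    if a = b then ∑ c ∈ Finset.univ.filter (fun c => T.graph.Adj a.1 c), w s(a.1, c)
    else if T.graph.Adj a.1 b.1 then - w s(a.1, b.1) else 0

end GridTree

namespace GridTree

variable {V : Type*} [Fintype V] [DecidableEq V] (T : GridTree V)

lemma pathToRoot_isPath (a : V) : (T.pathToRoot a).IsPath :=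
  (T.isTree.existsUnique_path a T.root).choose_spec.1

lemma pathToRoot_eq_dropUntil (a b : V) (h : b ∈ (T.pathToRoot a).support) :
    T.pathToRoot b = (T.pathToRoot a).dropUntil b h :=
  ((T.isTree.existsUnique_path b T.root).choose_spec.2 _
    ((T.pathToRoot_isPath a).dropUntil h)).symm

lemma pathEdges_subset (a b : V) (h : b ∈ (T.pathToRoot a).support) :
    T.pathEdges b ⊆ T.pathEdges a := by
  intro e he
  simp only [pathEdges, List.mem_toFinset] at he ⊢
  rw [T.pathToRoot_eq_dropUntil a b h] at he
  exact (T.pathToRoot a).edges_dropUntil_subset h he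

lemma exists_edge_not_mem (a b : V) (hne : a ≠ b) (h : b ∈ (T.pathToRoot a).support) :
    ∃ e ∈ T.pathEdges a, e ∉ T.pathEdges b := by
  set p := T.pathToRoot a with hp
  have hsplit : (p.takeUntil b h).append (p.dropUntil b h) = p := p.take_spec h
  have hne' : (p.takeUntil b h).edges ≠ [] := by
    intro hnil
    have hlen : (p.takeUntil b h).length = 0 := by
      have := congrArg List.length hnil
      simpa [SimpleGraph.Walk.length_edges] using this
    have : (p.takeUntil b h).Nil := SimpleGraph.Walk.nil_iff_length_eq.2 hlen
    have hsup : (p.takeUntil b h).support = [a] := SimpleGraph.Walk.nil_iff_support_eq.1 this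
    have hb : b ∈ (p.takeUntil b h).support := SimpleGraph.Walk.end_mem_support _
    rw [hsup] at hb
    simp at hb
    exact hne hb.symm
  obtain ⟨e, he⟩ := List.exists_mem_of_ne_nil _ hne'
  refine ⟨e, ?_, ?_⟩
  · simp only [pathEdges, List.mem_toFinset]
    exact p.edges_takeUntil_subset h he
  · have hnodup : p.edges.Nodup := (T.pathToRoot_isPath a).isTrail.edges_nodup
    rw [← hsplit, SimpleGraph.Walk.edges_append] at hnodup
    have hdisj := List.disjoint_of_nodup_append hnodup
    intro hmem
    simp only [pathEdges, List.mem_toFinset] at hmem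
    rw [T.pathToRoot_eq_dropUntil a b h] at hmem
    exact hdisj he hmem

lemma pathEdges_subset_edgeSet (a : V) : ∀ e ∈ T.pathEdges a, e ∈ T.graph.edgeSet := by
  intro e he
  simp only [pathEdges, List.mem_toFinset] at he
  exact (T.pathToRoot a).edges_subset_edgeSet he

lemma pathMatrix_symm (w : Sym2 V → ℝ) (i j : {v : V // v ≠ T.root}) :
    T.pathMatrix w i j = T.pathMatrix w j i := by
  simp [pathMatrix, Finset.inter_comm]

lemma pathMatrix_nonneg (w : Sym2 V → ℝ) (hw : ∀ e ∈ T.graph.edgeSet, 0 < w e)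
    (i j : {v : V // v ≠ T.root}) : 0 ≤ T.pathMatrix w i j :=
  Finset.sum_nonneg fun e he => (hw e (T.pathEdges_subset_edgeSet i.1 e
    (Finset.mem_of_mem_inter_left he))).le

lemma pathMatrix_le (w : Sym2 V → ℝ) (hw : ∀ e ∈ T.graph.edgeSet, 0 < w e)
    {a b : {v : V // v ≠ T.root}} (hdesc : T.Descendant a.1 b.1)
    (c : {v : V // v ≠ T.root}) : T.pathMatrix w b c ≤ T.pathMatrix w a c := by
  refine Finset.sum_le_sum_of_subset_of_nonneg ?_ ?_
  · exact Finset.inter_subset_inter_right (T.pathEdges_subset a.1 b.1 hdesc)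
  · intro e he _
    exact (hw e (T.pathEdges_subset_edgeSet a.1 e (Finset.mem_of_mem_inter_left he))).le

lemma pathMatrix_row_lt (w : Sym2 V → ℝ) (hw : ∀ e ∈ T.graph.edgeSet, 0 < w e)
    {a b : {v : V // v ≠ T.root}} (hne : a ≠ b) (hdesc : T.Descendant a.1 b.1) :
    T.pathMatrix w b a < T.pathMatrix w a a := by
  have hsub : T.pathEdges b.1 ⊆ T.pathEdges a.1 := T.pathEdges_subset a.1 b.1 hdesc
  have h1 : T.pathEdges b.1 ∩ T.pathEdges a.1 = T.pathEdges b.1 :=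
    Finset.inter_eq_left.2 hsub
  have h2 : T.pathEdges a.1 ∩ T.pathEdges a.1 = T.pathEdges a.1 := Finset.inter_self _
  obtain ⟨e, hea, heb⟩ := T.exists_edge_not_mem a.1 b.1 (fun h => hne (Subtype.ext h)) hdesc
  unfold pathMatrix
  rw [h1, h2]
  refine Finset.sum_lt_sum_of_subset hsub hea heb
    (hw e (T.pathEdges_subset_edgeSet a.1 e hea)) ?_
  intro j hj _
  exact (hw j (T.pathEdges_subset_edgeSet a.1 j hj)).le

end GridTree

section Aux

variable {ι : Type*} [Fintype ι]

lemma triple_mul_diag (M S N : Matrix ι ι ℝ) (_hM : ∀ i j, M i j = M j i)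
    (hN : ∀ i j, N i j = N j i) (v : ι) :
    (M * S * N) v v = ∑ c, ∑ d, M v c * S c d * N v d := by
  rw [Matrix.mul_apply]
  simp_rw [Matrix.mul_apply, Finset.sum_mul]
  rw [Finset.sum_comm]
  refine Finset.sum_congr rfl fun c _ => Finset.sum_congr rfl fun d _ => ?_
  rw [hN v d]

lemma sum_quad_le (f f' g g' : ι → ℝ) (S : Matrix ι ι ℝ)
    (hS : ∀ i j, 0 < S i j) (hf0 : ∀ i, 0 ≤ f i) (hg0 : ∀ i, 0 ≤ g i)
    (hf : ∀ i, f i ≤ f' i) (hg : ∀ i, g i ≤ g' i) :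
    ∑ c, ∑ d, f c * S c d * g d ≤ ∑ c, ∑ d, f' c * S c d * g' d := by
  refine Finset.sum_le_sum fun c _ => Finset.sum_le_sum fun d _ => ?_
  have h1 : f c * S c d * g d ≤ f' c * S c d * g d :=
    mul_le_mul_of_nonneg_right (mul_le_mul_of_nonneg_right (hf c) (hS c d).le) (hg0 d)
  have h2 : f' c * S c d * g d ≤ f' c * S c d * g' d :=
    mul_le_mul_of_nonneg_left (hg d)
      (mul_nonneg ((hf0 c).trans (hf c)) (hS c d).le)
  exact h1.trans h2

lemma sum_quad_lt [Nonempty ι] (f f' g g' : ι → ℝ) (S : Matrix ι ι ℝ)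
    (hS : ∀ i j, 0 < S i j) (hf0 : ∀ i, 0 ≤ f i) (hg0 : ∀ i, 0 ≤ g i)
    (hf : ∀ i, f i ≤ f' i) (hg : ∀ i, g i ≤ g' i)
    (i0 : ι) (hfi : f i0 < f' i0) (hgi : g i0 < g' i0) :
    ∑ c, ∑ d, f c * S c d * g d < ∑ c, ∑ d, f' c * S c d * g' d := by
  refine Finset.sum_lt_sum (fun c _ => Finset.sum_le_sum fun d _ => ?_)
    ⟨i0, Finset.mem_univ _, ?_⟩
  · have h1 : f c * S c d * g d ≤ f' c * S c d * g d :=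
      mul_le_mul_of_nonneg_right (mul_le_mul_of_nonneg_right (hf c) (hS c d).le) (hg0 d)
    have h2 : f' c * S c d * g d ≤ f' c * S c d * g' d :=
      mul_le_mul_of_nonneg_left (hg d)
        (mul_nonneg ((hf0 c).trans (hf c)) (hS c d).le)
    exact h1.trans h2
  · refine Finset.sum_lt_sum (fun d _ => ?_) ⟨i0, Finset.mem_univ _, ?_⟩
    · have h1 : f i0 * S i0 d * g d ≤ f' i0 * S i0 d * g d :=
        mul_le_mul_of_nonneg_right (mul_le_mul_of_nonneg_right (hf i0) (hS i0 d).le) (hg0 d)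
      have h2 : f' i0 * S i0 d * g d ≤ f' i0 * S i0 d * g' d :=
        mul_le_mul_of_nonneg_left (hg d)
          (mul_nonneg ((hf0 i0).trans (hf i0)) (hS i0 d).le)
      exact h1.trans h2
    · have hle : f i0 * S i0 i0 * g i0 ≤ f' i0 * S i0 i0 * g i0 :=
        mul_le_mul_of_nonneg_right
          (mul_le_mul_of_nonneg_right (hf i0) (hS i0 i0).le) (hg0 i0)
      have hlt : f' i0 * S i0 i0 * g i0 < f' i0 * S i0 i0 * g' i0 :=
        mul_lt_mul_of_pos_left hgi (mul_pos ((hf0 i0).trans_lt hfi) (hS i0 i0))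
      exact hle.trans_lt hlt

end Aux

/-- **Theorem 2.** In the LC-PF model on a rooted tree with strictly
positive resistances `r` and reactances `x`, with
`Σ_ε = K_r Σ_p K_r + K_x Σ_q K_x + K_r Σ_pq K_x + (K_r Σ_pq K_x)ᵀ` where `Σ_p, Σ_q` are
symmetric entrywise positive and `Σ_pq` is entrywise positive, if the non-root vertex
`a` is a descendant of the non-root vertex `b` with `a ≠ b`, then
`Σ_ε(a,a) > Σ_ε(b,b)`. -/
theorem lcpf_sigma_eps_diag_increases_down_tree
    {V : Type*} [Fintype V] [DecidableEq V] (T : GridTree V)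
    (r x : Sym2 V → ℝ)
    (hr : ∀ e ∈ T.graph.edgeSet, 0 < r e) (hx : ∀ e ∈ T.graph.edgeSet, 0 < x e)
    (Sp Sq Spq : Matrix {v : V // v ≠ T.root} {v : V // v ≠ T.root} ℝ)
    (hpsym : Sp.IsSymm) (hqsym : Sq.IsSymm)
    (hppos : ∀ i j, 0 < Sp i j) (hqpos : ∀ i j, 0 < Sq i j)
    (hpqpos : ∀ i j, 0 < Spq i j)
    (a b : {v : V // v ≠ T.root}) (hne : a ≠ b) (hdesc : T.Descendant a.1 b.1) :
    (T.pathMatrix r * Sp * T.pathMatrix r + T.pathMatrix x * Sq * T.pathMatrix x +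
        T.pathMatrix r * Spq * T.pathMatrix x +
        (T.pathMatrix r * Spq * T.pathMatrix x)ᵀ) a a >
      (T.pathMatrix r * Sp * T.pathMatrix r + T.pathMatrix x * Sq * T.pathMatrix x +
        T.pathMatrix r * Spq * T.pathMatrix x +
        (T.pathMatrix r * Spq * T.pathMatrix x)ᵀ) b b := by
  set Kr := T.pathMatrix r with hKr
  set Kx := T.pathMatrix x with hKx
  have hKrs : ∀ i j, Kr i j = Kr j i := fun i j => T.pathMatrix_symm r i j
  have hKxs : ∀ i j, Kx i j = Kx j i := fun i j => T.pathMatrix_symm x i j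
  have hKr0 : ∀ i j, 0 ≤ Kr i j := T.pathMatrix_nonneg r hr
  have hKx0 : ∀ i j, 0 ≤ Kx i j := T.pathMatrix_nonneg x hx
  have hKrle : ∀ c, Kr b c ≤ Kr a c := T.pathMatrix_le r hr hdesc
  have hKxle : ∀ c, Kx b c ≤ Kx a c := T.pathMatrix_le x hx hdesc
  have hKrlt : Kr b a < Kr a a := T.pathMatrix_row_lt r hr hne hdesc
  have hKxlt : Kx b a < Kx a a := T.pathMatrix_row_lt x hx hne hdesc
  have e1 : ∀ v, (Kr * Sp * Kr) v v = ∑ c, ∑ d, Kr v c * Sp c d * Kr v d :=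
    triple_mul_diag Kr Sp Kr hKrs hKrs
  have e2 : ∀ v, (Kx * Sq * Kx) v v = ∑ c, ∑ d, Kx v c * Sq c d * Kx v d :=
    triple_mul_diag Kx Sq Kx hKxs hKxs
  have e3 : ∀ v, (Kr * Spq * Kx) v v = ∑ c, ∑ d, Kr v c * Spq c d * Kx v d :=
    triple_mul_diag Kr Spq Kx hKrs hKxs
  have i1 : (Kr * Sp * Kr) b b < (Kr * Sp * Kr) a a := by
    rw [e1 a, e1 b]
    haveI : Nonempty {v : V // v ≠ T.root} := ⟨a⟩
    exact sum_quad_lt (fun c => Kr b c) (fun c => Kr a c) (fun c => Kr b c)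
      (fun c => Kr a c) Sp hppos (hKr0 b) (hKr0 b) hKrle hKrle a hKrlt hKrlt
  have i2 : (Kx * Sq * Kx) b b ≤ (Kx * Sq * Kx) a a := by
    rw [e2 a, e2 b]
    exact sum_quad_le (fun c => Kx b c) (fun c => Kx a c) (fun c => Kx b c)
      (fun c => Kx a c) Sq hqpos (hKx0 b) (hKx0 b) hKxle hKxle
  have i3 : (Kr * Spq * Kx) b b ≤ (Kr * Spq * Kx) a a := by
    rw [e3 a, e3 b]
    exact sum_quad_le (fun c => Kr b c) (fun c => Kr a c) (fun c => Kx b c)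
      (fun c => Kx a c) Spq hpqpos (hKr0 b) (hKx0 b) hKrle hKxle
  simp only [Matrix.add_apply, Matrix.transpose_apply]
  linarith
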